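/- Let H = {z ∈ ℂ : Im z > 0} and define φ : H → ℝ by φ(z) = Σ_{j=1}^∞ 2^{−j} e^{−2^j Im z}. Then the series converges and defines a smooth function on H with 0 ≤ φ ≤ 1; φ is subharmonic, with Δφ(z) = Σ_{j=1}^∞ 2^{j} e^{−2^j Im z} ≥ 0; and Δφ(z) → ∞ as z approaches the boundary, i.e. for every M > 0 there is δ > 0 such that Δφ(z) ≥ M whenever 0 < Im z < δ. -/

import Mathlib

/-!
With `g(y) = ∑ cⱼ e^{-νⱼ y}` we have `φ(z) = g(Im z)`, so `Δφ(z) = g''(Im z)` and everything is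
one-dimensional. If the frequencies grow at least linearly (`j ≤ νⱼ`) and the coefficients are
polynomially bounded in `νⱼ`, the termwise derivative is a series of the same kind, and on
`y ≥ ε` it is dominated by `∑ νⱼ^m e^{-νⱼ ε}`, which converges because
`ν^m e^{-ν ε} ≤ m! (2/ε)^m e^{-ν ε/2}`. Hence `g` is smooth on `y > 0` and may be differentiated
termwise; for `cⱼ = 2^{-j}`, `νⱼ = 2^j` this gives `g'' = ∑ 2^j e^{-2^j y}`.
-/

noncomputable section

/-- The real Laplacian `Δφ = ∂²φ/∂x² + ∂²φ/∂y²` of a function on `ℂ`. -/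
def lapC (φ : ℂ → ℝ) (z : ℂ) : ℝ :=
  fderiv ℝ (fun w => fderiv ℝ φ w 1) z 1
    + fderiv ℝ (fun w => fderiv ℝ φ w Complex.I) z Complex.I

/-- The weight `φ(z) = Σ_{j=1}^∞ 2^{−j} e^{−2^j Im z}` on the upper half plane. -/
def phiH : ℂ → ℝ := fun z => ∑' j : ℕ, ((2:ℝ)⁻¹)^(j+1) * Real.exp (-(2:ℝ)^(j+1) * z.im)

open Real Filter Topology Set
open scoped Nat ContDiff

lemma pow_mul_exp_neg_le_factorial {a : ℝ} (ha : 0 ≤ a) (m : ℕ) : a ^ m * exp (-a) ≤ m ! := by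
  have h := pow_div_factorial_le_exp _ ha m
  rw [div_le_iff₀ (by positivity)] at h
  calc a ^ m * exp (-a) ≤ exp a * m ! * exp (-a) := by gcongr
    _ = m ! := by rw [mul_comm, ← mul_assoc, ← exp_add, neg_add_cancel, exp_zero, one_mul]

lemma pow_mul_exp_neg_mul_le {x ε : ℝ} (hx : 0 ≤ x) (hε : 0 < ε) (m : ℕ) :
    x ^ m * exp (-x * ε) ≤ m ! * (2 / ε) ^ m * exp (-x * (ε / 2)) := by
  have h := pow_mul_exp_neg_le_factorial (mul_nonneg hx (half_pos hε).le) m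
  calc x ^ m * exp (-x * ε)
      = (2 / ε) ^ m * ((x * (ε / 2)) ^ m * exp (-(x * (ε / 2)))) * exp (-x * (ε / 2)) := by
        have hexp : exp (-x * ε) = exp (-(x * (ε / 2))) * exp (-x * (ε / 2)) := by
          rw [← exp_add]; ring_nf
        have hpow : (2 / ε) ^ m * (x * (ε / 2)) ^ m = x ^ m := by
          rw [← mul_pow]; field_simp
        rw [hexp, ← hpow]; ring
    _ ≤ (2 / ε) ^ m * m ! * exp (-x * (ε / 2)) := by gcongr
    _ = m ! * (2 / ε) ^ m * exp (-x * (ε / 2)) := by ring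

def expSeries (ν c : ℕ → ℝ) (y : ℝ) : ℝ := ∑' j, c j * exp (-ν j * y)

def PolynomiallyBounded (ν c : ℕ → ℝ) : Prop := ∃ C : ℝ, ∃ m : ℕ, ∀ j, |c j| ≤ C * ν j ^ m

section ExpSeries

variable {ν c : ℕ → ℝ}

lemma summable_exp_neg_mul (hν : ∀ j : ℕ, (j : ℝ) ≤ ν j) {ε : ℝ} (hε : 0 < ε) :
    Summable fun j => exp (-ν j * ε) := by
  refine .of_nonneg_of_le (fun j => (exp_pos _).le) (fun j => ?_)
    (summable_geometric_of_lt_one (exp_pos _).le (exp_lt_one_iff.2 (neg_neg_iff_pos.2 hε)))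
  rw [← exp_nat_mul, exp_le_exp]
  nlinarith [hν j]

lemma summable_pow_mul_exp_neg_mul (hν : ∀ j : ℕ, (j : ℝ) ≤ ν j) (m : ℕ) {ε : ℝ} (hε : 0 < ε) :
    Summable fun j => ν j ^ m * exp (-ν j * ε) :=
  have hν₀ j : 0 ≤ ν j := (Nat.cast_nonneg j).trans (hν j)
  .of_nonneg_of_le (fun j => by have := hν₀ j; positivity)
    (fun j => pow_mul_exp_neg_mul_le (hν₀ j) hε m)
    ((summable_exp_neg_mul hν (half_pos hε)).mul_left _)

lemma PolynomiallyBounded.neg_mul (hν : ∀ j : ℕ, (j : ℝ) ≤ ν j) (hc : PolynomiallyBounded ν c) :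
    PolynomiallyBounded ν (fun j => -ν j * c j) := by
  obtain ⟨C, m, h⟩ := hc
  have hν₀ j : 0 ≤ ν j := (Nat.cast_nonneg j).trans (hν j)
  refine ⟨C, m + 1, fun j => ?_⟩
  rw [abs_mul, abs_neg, abs_of_nonneg (hν₀ j), pow_succ]
  nlinarith [h j, hν₀ j]

lemma PolynomiallyBounded.exists_summable_bound (hν : ∀ j : ℕ, (j : ℝ) ≤ ν j)
    (hc : PolynomiallyBounded ν c) {ε : ℝ} (hε : 0 < ε) :
    ∃ u : ℕ → ℝ, Summable u ∧ ∀ j y, ε ≤ y → ‖c j * exp (-ν j * y)‖ ≤ u j := by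
  obtain ⟨C, m, h⟩ := hc
  have hν₀ j : 0 ≤ ν j := (Nat.cast_nonneg j).trans (hν j)
  refine ⟨fun j => C * (ν j ^ m * exp (-ν j * ε)),
    (summable_pow_mul_exp_neg_mul hν m hε).mul_left C, fun j y hy => ?_⟩
  have hexp : exp (-ν j * y) ≤ exp (-ν j * ε) := exp_le_exp.2 (by nlinarith [hν₀ j])
  calc ‖c j * exp (-ν j * y)‖ = |c j| * exp (-ν j * y) := by
        rw [norm_mul, norm_of_nonneg (exp_pos _).le, Real.norm_eq_abs]
    _ ≤ C * ν j ^ m * exp (-ν j * ε) :=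
        mul_le_mul (h j) hexp (exp_pos _).le ((abs_nonneg _).trans (h j))
    _ = C * (ν j ^ m * exp (-ν j * ε)) := mul_assoc _ _ _

lemma PolynomiallyBounded.summable (hν : ∀ j : ℕ, (j : ℝ) ≤ ν j) (hc : PolynomiallyBounded ν c)
    {y : ℝ} (hy : 0 < y) : Summable fun j => c j * exp (-ν j * y) :=
  have ⟨_, hu, hbound⟩ := hc.exists_summable_bound hν hy
  .of_norm_bounded hu fun j => hbound j y le_rfl

lemma hasDerivAt_expSeries (hν : ∀ j : ℕ, (j : ℝ) ≤ ν j) (hc : PolynomiallyBounded ν c) {y : ℝ}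
    (hy : 0 < y) : HasDerivAt (expSeries ν c) ((expSeries ν fun j => -ν j * c j) y) y := by
  obtain ⟨u, hu, hbound⟩ := (hc.neg_mul hν).exists_summable_bound hν (half_pos hy)
  have hterm j x : HasDerivAt (fun x => c j * exp (-ν j * x)) (-ν j * c j * exp (-ν j * x)) x := by
    simpa [mul_comm, mul_left_comm, mul_assoc] using
      (((hasDerivAt_id x).const_mul (-ν j)).exp).const_mul (c j)
  exact hasDerivAt_tsum_of_isPreconnected hu isOpen_Ioi isPreconnected_Ioi
    (fun j x _ => hterm j x) (fun j x hx => hbound j x hx.le) (half_lt_self hy)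
    (hc.summable hν hy) (half_lt_self hy)

lemma contDiffOn_expSeries (hν : ∀ j : ℕ, (j : ℝ) ≤ ν j) (hc : PolynomiallyBounded ν c) :
    ContDiffOn ℝ ∞ (expSeries ν c) (Ioi 0) := by
  refine contDiffOn_infty.2 fun n => ?_
  induction n generalizing c with
  | zero =>
    exact contDiffOn_zero.2 fun y hy =>
      (hasDerivAt_expSeries hν hc hy).continuousAt.continuousWithinAt
  | succ n ih =>
    refine (contDiffOn_succ_iff_deriv_of_isOpen isOpen_Ioi).2
      ⟨fun y hy => (hasDerivAt_expSeries hν hc hy).differentiableAt.differentiableWithinAt,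
        by simp, (ih (hc.neg_mul hν)).congr fun y hy => (hasDerivAt_expSeries hν hc hy).deriv⟩

end ExpSeries

lemma lapC_comp_im {g g' : ℝ → ℝ} {a : ℝ} {z : ℂ} (hg : ∀ᶠ y in 𝓝 z.im, HasDerivAt g (g' y) y)
    (hg' : HasDerivAt g' a z.im) : lapC (fun w => g w.im) z = a := by
  have hfderiv : ∀ᶠ w in 𝓝 z, fderiv ℝ (fun w => g w.im) w = g' w.im • Complex.imCLM :=
    ((Complex.continuous_im.tendsto z).eventually hg).mono fun w hw =>
      (hw.comp_hasFDerivAt w Complex.imCLM.hasFDerivAt).fderiv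
  have hone : (fun w => fderiv ℝ (fun w => g w.im) w 1) =ᶠ[𝓝 z] fun _ => 0 :=
    hfderiv.mono fun w hw => by simp [hw]
  have hI : (fun w => fderiv ℝ (fun w => g w.im) w Complex.I) =ᶠ[𝓝 z] fun w => g' w.im :=
    hfderiv.mono fun w hw => by simp [hw]
  have hg'im : HasFDerivAt (fun w : ℂ => g' w.im) (a • Complex.imCLM) z :=
    hg'.comp_hasFDerivAt z Complex.imCLM.hasFDerivAt
  rw [lapC, hone.fderiv_eq, hI.fderiv_eq, hg'im.fderiv]
  simp

lemma natCast_le_two_pow_succ (j : ℕ) : (j : ℝ) ≤ 2 ^ (j + 1) := by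
  exact_mod_cast (Nat.le_succ j).trans Nat.lt_two_pow_self.le

lemma polynomiallyBounded_inv_two_pow :
    PolynomiallyBounded (fun j => (2 : ℝ) ^ (j + 1)) (fun j => (2 : ℝ)⁻¹ ^ (j + 1)) :=
  ⟨1, 0, fun j => by
    rw [abs_of_pos (by positivity), pow_zero, one_mul]
    exact pow_le_one₀ (by norm_num) (by norm_num)⟩

lemma phiH_eq_expSeries :
    phiH = fun z => expSeries (fun j => (2 : ℝ) ^ (j + 1)) (fun j => (2 : ℝ)⁻¹ ^ (j + 1)) z.im :=
  rfl

lemma phiH_contDiffOn : ContDiffOn ℝ ∞ phiH {z : ℂ | 0 < z.im} :=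
  (contDiffOn_expSeries natCast_le_two_pow_succ polynomiallyBounded_inv_two_pow).comp
    Complex.imCLM.contDiff.contDiffOn fun _ hz => hz

lemma phiH_nonneg_and_le_one {z : ℂ} (hz : 0 ≤ z.im) : 0 ≤ phiH z ∧ phiH z ≤ 1 := by
  have hterm j : (2 : ℝ)⁻¹ ^ (j + 1) * exp (-(2 : ℝ) ^ (j + 1) * z.im) ≤ (2 : ℝ)⁻¹ ^ (j + 1) :=
    mul_le_of_le_one_right (by positivity)
      (exp_le_one_iff.2 (by rw [neg_mul, neg_nonpos]; positivity))
  have hgeom : HasSum (fun j : ℕ => (2 : ℝ)⁻¹ ^ (j + 1)) 1 := by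
    simpa [pow_succ', div_eq_mul_inv] using hasSum_geometric_two' 1
  refine ⟨tsum_nonneg fun j => by positivity, ?_⟩
  calc phiH z ≤ ∑' j : ℕ, (2 : ℝ)⁻¹ ^ (j + 1) :=
        (hgeom.summable.of_nonneg_of_le (fun j => by positivity) hterm).tsum_le_tsum hterm
          hgeom.summable
    _ = 1 := hgeom.tsum_eq

lemma lapC_phiH {z : ℂ} (hz : 0 < z.im) :
    lapC phiH z = ∑' j : ℕ, (2 : ℝ) ^ (j + 1) * exp (-(2 : ℝ) ^ (j + 1) * z.im) := by
  have hν := natCast_le_two_pow_succ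
  have hc := polynomiallyBounded_inv_two_pow
  rw [phiH_eq_expSeries, lapC_comp_im
    (eventually_of_mem (isOpen_Ioi.mem_nhds hz) fun y hy => hasDerivAt_expSeries hν hc hy)
    (hasDerivAt_expSeries hν (hc.neg_mul hν) hz)]
  refine tsum_congr fun j => ?_
  simp only [inv_pow]
  field_simp

/-- For `y < 2⁻ʲ` the single term `2ʲ e^{-2ʲ y}` already exceeds `2ʲ / e`. -/
lemma exists_forall_le_tsum_two_pow_mul_exp (M : ℝ) : ∃ δ > 0, ∀ y : ℝ, 0 < y → y < δ →
    M ≤ ∑' j : ℕ, (2 : ℝ) ^ (j + 1) * exp (-(2 : ℝ) ^ (j + 1) * y) := by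
  obtain ⟨J, hJ⟩ := pow_unbounded_of_one_lt (M * exp 1) one_lt_two
  have hpos : (0 : ℝ) < 2 ^ (J + 1) := by positivity
  refine ⟨1 / 2 ^ (J + 1), by positivity, fun y hy hyδ => ?_⟩
  have hsum : Summable fun j : ℕ => (2 : ℝ) ^ (j + 1) * exp (-(2 : ℝ) ^ (j + 1) * y) := by
    simpa using summable_pow_mul_exp_neg_mul natCast_le_two_pow_succ 1 hy
  calc M = M * exp 1 * exp (-1) := by rw [mul_assoc, ← exp_add, add_neg_cancel, exp_zero, mul_one]
    _ ≤ 2 ^ (J + 1) * exp (-1) := by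
        gcongr
        exact hJ.le.trans (pow_le_pow_right₀ one_le_two J.le_succ)
    _ ≤ 2 ^ (J + 1) * exp (-(2 : ℝ) ^ (J + 1) * y) := by
        gcongr
        rw [lt_div_iff₀ hpos] at hyδ
        linarith
    _ ≤ _ := hsum.le_tsum J fun j _ => by positivity

/-- on `H = {Im z > 0}` the series defining `φ` converges and defines a smooth
function with `0 ≤ φ ≤ 1`; `φ` is subharmonic with `Δφ(z) = Σ_{j=1}^∞ 2^j e^{−2^j Im z} ≥ 0`;
and `Δφ(z) → ∞` as `z` approaches the boundary. -/
theorem stmt13 :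
    (∀ z : ℂ, 0 < z.im →
      Summable (fun j : ℕ => ((2:ℝ)⁻¹)^(j+1) * Real.exp (-(2:ℝ)^(j+1) * z.im))) ∧
    ContDiffOn ℝ (⊤ : ℕ∞) phiH {z : ℂ | 0 < z.im} ∧
    (∀ z : ℂ, 0 < z.im → 0 ≤ phiH z ∧ phiH z ≤ 1) ∧
    (∀ z : ℂ, 0 < z.im →
      lapC phiH z = ∑' j : ℕ, (2:ℝ)^(j+1) * Real.exp (-(2:ℝ)^(j+1) * z.im) ∧
      0 ≤ lapC phiH z) ∧
    (∀ M : ℝ, 0 < M → ∃ δ : ℝ, 0 < δ ∧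
      ∀ z : ℂ, 0 < z.im → z.im < δ → M ≤ lapC phiH z) := by
  refine ⟨fun z hz => polynomiallyBounded_inv_two_pow.summable natCast_le_two_pow_succ hz,
    phiH_contDiffOn, fun z hz => phiH_nonneg_and_le_one hz.le,
    fun z hz => ⟨lapC_phiH hz, lapC_phiH hz ▸ tsum_nonneg fun j => by positivity⟩,
    fun M _ => ?_⟩
  obtain ⟨δ, hδ, hblow⟩ := exists_forall_le_tsum_two_pow_mul_exp M
  exact ⟨δ, hδ, fun z hz hzδ => lapC_phiH hz ▸ hblow z.im hz hzδ⟩
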